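/- Define U_n = {ζ ∈ 𝕋 : 10|ζ - e^{-in/2ⁿ}| < n/2ⁿ} for n ≥ 1 and U₀ = 𝕋, and let Q_N = D_N²/(2N+1) with D_N the Dirichlet kernel. Then there is an absolute constant C such that ∑_{n≥0} (2^{n+1}+1)^{-1} |Q_{2ⁿ}(e^{in/2ⁿ} ζ)| ≤ C for every ζ ∈ 𝕋. -/

import Mathlib

open scoped ComplexConjugate

noncomputable section

abbrev ℓ2 (ι : Type) := lp (fun _ : ι => ℂ) 2

/-- `F` has rank at most `n`. -/
def FinRankLE {E : Type*} [NormedAddCommGroup E] [InnerProductSpace ℂ E]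
    (n : ℕ) (F : E →L[ℂ] E) : Prop :=
  ∃ v : Fin n → E, LinearMap.range (F : E →ₗ[ℂ] E) ≤ Submodule.span ℂ (Set.range v)

/-- Singular values as approximation numbers. -/
noncomputable def sv {E : Type*} [NormedAddCommGroup E] [InnerProductSpace ℂ E]
    (T : E →L[ℂ] E) (n : ℕ) : ℝ :=
  sInf {c : ℝ | ∃ F : E →L[ℂ] E, FinRankLE n F ∧ c = ‖T - F‖}

/-- Membership in the Schatten--von Neumann class `S_p`. -/
def MemSp {E : Type*} [NormedAddCommGroup E] [InnerProductSpace ℂ E]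
    (p : ℝ) (T : E →L[ℂ] E) : Prop :=
  Summable (fun n => sv T n ^ p)

/-- The Schatten `S_p` quasi-norm. -/
noncomputable def spNorm {E : Type*} [NormedAddCommGroup E] [InnerProductSpace ℂ E]
    (p : ℝ) (T : E →L[ℂ] E) : ℝ :=
  (∑' n, sv T n ^ p) ^ (1/p)

/-- The matrix of an operator on `ℓ²(ι)`. -/
noncomputable def matrixOf {ι : Type} [DecidableEq ι]
    (T : ℓ2 ι →L[ℂ] ℓ2 ι) (j k : ι) : ℂ :=
  (inner ℂ (lp.single 2 j (1:ℂ)) (T (lp.single 2 k 1)) : ℂ)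

/-- `a` is a Schur multiplier of `S_p`. -/
def IsSchurMult {ι : Type} [DecidableEq ι] (p : ℝ) (a : ι → ι → ℂ) : Prop :=
  ∀ T : ℓ2 ι →L[ℂ] ℓ2 ι, MemSp p T →
    ∃ S : ℓ2 ι →L[ℂ] ℓ2 ι, MemSp p S ∧ ∀ j k, matrixOf S j k = a j k * matrixOf T j k

/-- The Schur multiplier quasi-norm `‖a‖_{M_p}`. -/
noncomputable def multNorm {ι : Type} [DecidableEq ι] (p : ℝ) (a : ι → ι → ℂ) : ℝ :=
  sSup {c : ℝ | ∃ T S : ℓ2 ι →L[ℂ] ℓ2 ι, MemSp p T ∧ spNorm p T ≤ 1 ∧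
    (∀ j k, matrixOf S j k = a j k * matrixOf T j k) ∧ c = spNorm p S}


/-! Since `|w - 1| |D_N(w)| ≤ 2` on the circle, the `n`-th summand is at most `100/n²` as soon as
`ζ ∉ U_n`, and it is always at most `1`. The centres `e^{-in/2ⁿ}` of the arcs move by about
`n/2ⁿ` from `U_n` to `U_{n+2}` while their radii are `n/(10·2ⁿ)`, so `U_n ∩ U_m = ∅` for
`m ≥ n + 2 ≥ 4`. Hence `ζ` lies in at most two arcs `U_n` with `n ≥ 2`, and the sum is at most
`4 + 100 ∑ 1/n²`. -/

section

open Complex Finset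

def dirichletKernel (N : ℕ) (z : ℂ) : ℂ :=
  ∑ k ∈ Icc (-(N : ℤ)) N, z ^ k

lemma dirichletKernel_eq_zpow_mul_geom_sum {z : ℂ} (hz : z ≠ 0) (N : ℕ) :
    dirichletKernel N z = z ^ (-(N : ℤ)) * ∑ j ∈ range (2 * N + 1), z ^ j := by
  rw [dirichletKernel, mul_sum]
  symm
  refine sum_nbij' (fun j => (j : ℤ) - N) (fun k => (k + N).toNat) ?_ ?_ ?_ ?_ ?_ <;>
    simp only [mem_range, mem_Icc]
  · omega
  · omega
  · simp
  · omega
  · intro j _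
    rw [sub_eq_neg_add, zpow_add₀ hz, zpow_natCast]

lemma norm_dirichletKernel_le {z : ℂ} (hz : ‖z‖ = 1) (N : ℕ) :
    ‖dirichletKernel N z‖ ≤ 2 * N + 1 := by
  calc ‖dirichletKernel N z‖ ≤ ∑ k ∈ Icc (-(N : ℤ)) N, ‖z ^ k‖ := norm_sum_le _ _
    _ = #(Icc (-(N : ℤ)) N) := by simp [norm_zpow, hz]
    _ = 2 * N + 1 := by
      rw [Int.card_Icc, show (N + 1 - -N : ℤ).toNat = 2 * N + 1 by omega]
      push_cast
      ring

lemma norm_sub_one_mul_norm_dirichletKernel_le {z : ℂ} (hz : ‖z‖ = 1) (N : ℕ) :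
    ‖z - 1‖ * ‖dirichletKernel N z‖ ≤ 2 := by
  have hz0 : z ≠ 0 := norm_ne_zero_iff.mp (by simp [hz])
  have htelescope : (z - 1) * dirichletKernel N z = z ^ (-(N : ℤ)) * (z ^ (2 * N + 1) - 1) := by
    rw [dirichletKernel_eq_zpow_mul_geom_sum hz0, ← geom_sum_mul]
    ring
  rw [← norm_mul, htelescope, norm_mul, norm_zpow, hz, one_zpow, one_mul]
  calc ‖z ^ (2 * N + 1) - 1‖ ≤ ‖z ^ (2 * N + 1)‖ + ‖(1 : ℂ)‖ := norm_sub_le _ _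
    _ = 2 := by norm_num [hz]

lemma sq_norm_dirichletKernel_div_le_one {z : ℂ} (hz : ‖z‖ = 1) (N : ℕ) :
    ‖dirichletKernel N z‖ ^ 2 / (2 * N + 1) ^ 2 ≤ 1 := by
  rw [div_le_one (by positivity)]
  exact pow_le_pow_left₀ (norm_nonneg _) (norm_dirichletKernel_le hz N) 2

lemma sq_mul_sq_norm_dirichletKernel_div_le_one {z : ℂ} (hz : ‖z‖ = 1) (N : ℕ) :
    (‖z - 1‖ * N) ^ 2 * (‖dirichletKernel N z‖ ^ 2 / (2 * N + 1) ^ 2) ≤ 1 := by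
  rw [← mul_div_assoc, ← mul_pow, div_le_one (by positivity)]
  have hD := norm_sub_one_mul_norm_dirichletKernel_le hz N
  have hmul : ‖z - 1‖ * N * ‖dirichletKernel N z‖ ≤ 2 * N + 1 := by
    nlinarith [mul_le_mul_of_nonneg_right hD (Nat.cast_nonneg N : (0 : ℝ) ≤ N)]
  exact pow_le_pow_left₀ (by positivity) hmul 2

lemma two_div_pi_mul_le_norm_exp_I_mul_sub_one {x : ℝ} (h0 : 0 ≤ x) (hx : x ≤ Real.pi) :
    2 / Real.pi * x ≤ ‖exp (I * x) - 1‖ := by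
  have hsin : 2 / Real.pi * (x / 2) ≤ Real.sin (x / 2) := Real.mul_le_sin (by linarith) (by linarith)
  have hsin0 : 0 ≤ Real.sin (x / 2) := Real.sin_nonneg_of_nonneg_of_le_pi (by linarith) (by linarith)
  rw [norm_exp_I_mul_ofReal_sub_one, Real.norm_eq_abs, abs_of_nonneg (by linarith)]
  linarith

/-- For `b ≤ a/2` the points `e^{-ia}`, `e^{-ib}` are farther apart than `(a + b)/10`. -/
lemma le_norm_exp_I_mul_mul_sub_one {ζ : ℂ} (hζ : ‖ζ‖ = 1) {a b : ℝ} (hb : 0 ≤ b)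
    (hba : b ≤ a / 2) (ha : a ≤ Real.pi) (hζa : 10 * ‖exp (I * a) * ζ - 1‖ < a) :
    b ≤ 10 * ‖exp (I * b) * ζ - 1‖ := by
  set u := exp (I * b) * ζ
  have hu : ‖u‖ = 1 := by
    rw [norm_mul, hζ, mul_one, mul_comm, norm_exp_ofReal_mul_I]
  have hrotate : (exp (I * ↑(a - b)) - 1) * u = (exp (I * a) * ζ - 1) - (u - 1) := by
    rw [ofReal_sub, mul_sub, exp_sub]
    field_simp
    ring
  have hchord : ‖exp (I * ↑(a - b)) - 1‖ ≤ ‖exp (I * a) * ζ - 1‖ + ‖u - 1‖ := by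
    rw [← mul_one ‖exp (I * ↑(a - b)) - 1‖, ← hu, ← norm_mul, hrotate]
    exact norm_sub_le _ _
  have hjordan := two_div_pi_mul_le_norm_exp_I_mul_sub_one (x := a - b) (by linarith) (by linarith)
  have hpi : 1 / 2 ≤ 2 / Real.pi := by
    rw [div_le_div_iff₀ (by norm_num) Real.pi_pos]
    linarith [Real.pi_le_four]
  nlinarith [mul_le_mul_of_nonneg_right hpi (by linarith : 0 ≤ a - b)]

lemma antitoneOn_natCast_div_two_pow : AntitoneOn (fun k : ℕ => (k : ℝ) / 2 ^ k) (Set.Ici 1) := by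
  refine antitoneOn_nat_Ici_of_succ_le fun k hk => ?_
  have hk' : (1 : ℝ) ≤ k := by exact_mod_cast hk
  rw [div_le_div_iff₀ (by positivity) (by positivity), pow_succ]
  push_cast
  nlinarith [pow_pos (two_pos : (0 : ℝ) < 2) k]

/-- The paper's arc `U_n`, `10 |ζ - e^{-in/2ⁿ}| < n/2ⁿ`, rotated by `e^{in/2ⁿ}`. -/
def MemArc (n : ℕ) (ζ : ℂ) : Prop :=
  10 * ‖exp (I * n / 2 ^ n) * ζ - 1‖ < n / 2 ^ n

instance (n : ℕ) (ζ : ℂ) : Decidable (MemArc n ζ) := by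
  unfold MemArc
  infer_instance

lemma I_mul_natCast_div_two_pow (n : ℕ) : I * n / 2 ^ n = I * ((n / 2 ^ n : ℝ) : ℂ) := by
  push_cast
  ring

lemma norm_exp_I_mul_natCast_div_two_pow_mul {ζ : ℂ} (hζ : ‖ζ‖ = 1) (n : ℕ) :
    ‖exp (I * n / 2 ^ n) * ζ‖ = 1 := by
  rw [norm_mul, hζ, mul_one, I_mul_natCast_div_two_pow, mul_comm, norm_exp_ofReal_mul_I]

lemma not_memArc_of_memArc {ζ : ℂ} (hζ : ‖ζ‖ = 1) {n m : ℕ} (hn : 2 ≤ n) (hm : n + 2 ≤ m)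
    (h : MemArc n ζ) : ¬ MemArc m ζ := by
  have hsmall : (n + 2 : ℕ) / (2 : ℝ) ^ (n + 2) ≤ n / 2 ^ n / 2 := by
    have hn' : (2 : ℝ) ≤ n := by exact_mod_cast hn
    rw [div_div, div_le_div_iff₀ (by positivity) (by positivity), pow_add]
    push_cast
    nlinarith [pow_pos (two_pos : (0 : ℝ) < 2) n]
  have hmn := antitoneOn_natCast_div_two_pow (a := n + 2) (b := m) (by simp) (by simp; omega) hm
  have hle_one : (n : ℝ) / 2 ^ n ≤ 1 := by
    rw [div_le_one (by positivity)]
    exact_mod_cast n.lt_two_pow_self.le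
  unfold MemArc at h ⊢
  rw [I_mul_natCast_div_two_pow] at h ⊢
  exact not_lt.mpr <| le_norm_exp_I_mul_mul_sub_one hζ (by positivity) (hmn.trans hsmall)
    (by linarith [Real.pi_gt_three]) h

lemma Finset.card_le_two_of_forall_le_add_one {S : Finset ℕ} (h : ∀ n ∈ S, ∀ m ∈ S, m ≤ n + 1) :
    #S ≤ 2 := by
  rcases S.eq_empty_or_nonempty with rfl | hS
  · simp
  · have hsub : S ⊆ Icc (S.min' hS) (S.min' hS + 1) := fun m hm =>
      mem_Icc.mpr ⟨S.min'_le m hm, h _ (S.min'_mem hS) m hm⟩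
    exact (card_le_card hsub).trans (by rw [Nat.card_Icc]; omega)

lemma card_filter_memArc_le {ζ : ℂ} (hζ : ‖ζ‖ = 1) (F : Finset ℕ) :
    #(F.filter fun n => n ≤ 1 ∨ MemArc n ζ) ≤ 4 := by
  have hsub : F.filter (fun n => n ≤ 1 ∨ MemArc n ζ)
      ⊆ range 2 ∪ F.filter (fun n => 2 ≤ n ∧ MemArc n ζ) := by
    intro n hn
    rw [mem_filter] at hn
    rw [mem_union, mem_range, mem_filter]
    by_cases h2 : n < 2
    · exact Or.inl h2
    · exact Or.inr ⟨hn.1, by omega, hn.2.resolve_left (by omega)⟩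
  have hfar : #(F.filter fun n => 2 ≤ n ∧ MemArc n ζ) ≤ 2 := by
    refine Finset.card_le_two_of_forall_le_add_one fun n hn m hm => ?_
    simp only [mem_filter] at hn hm
    by_contra! hnm
    exact not_memArc_of_memArc hζ hn.2.1 hnm hn.2.2 hm.2.2
  calc _ ≤ #(range 2 ∪ F.filter fun n => 2 ≤ n ∧ MemArc n ζ) := card_le_card hsub
    _ ≤ #(range 2) + #(F.filter fun n => 2 ≤ n ∧ MemArc n ζ) := card_union_le _ _
    _ ≤ 4 := by rw [card_range]; omega

lemma inv_mul_norm_dirichletKernel_sq_div_eq (n : ℕ) (w : ℂ) :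
    ((2 : ℝ) ^ (n + 1) + 1)⁻¹ *
        ‖(∑ k ∈ Icc (-(2 ^ n : ℤ)) (2 ^ n : ℤ), w ^ k) ^ 2 / ((2 * 2 ^ n + 1 : ℂ))‖
      = ‖dirichletKernel (2 ^ n) w‖ ^ 2 / (2 * ((2 ^ n : ℕ) : ℝ) + 1) ^ 2 := by
  have hnorm : ‖(2 * 2 ^ n + 1 : ℂ)‖ = 2 * 2 ^ n + 1 := by
    exact_mod_cast Complex.norm_natCast (2 * 2 ^ n + 1)
  rw [dirichletKernel, norm_div, norm_pow, hnorm, pow_succ]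
  push_cast
  field_simp

lemma sq_norm_dirichletKernel_div_le_of_not_memArc {ζ : ℂ} (hζ : ‖ζ‖ = 1) {n : ℕ} (hn : 0 < n)
    (h : ¬ MemArc n ζ) :
    ‖dirichletKernel (2 ^ n) (exp (I * n / 2 ^ n) * ζ)‖ ^ 2 / (2 * ((2 ^ n : ℕ) : ℝ) + 1) ^ 2
      ≤ 100 / (n : ℝ) ^ 2 := by
  set X := ‖dirichletKernel (2 ^ n) (exp (I * n / 2 ^ n) * ζ)‖ ^ 2 / (2 * ((2 ^ n : ℕ) : ℝ) + 1) ^ 2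
  have hbound := sq_mul_sq_norm_dirichletKernel_div_le_one
    (norm_exp_I_mul_natCast_div_two_pow_mul hζ n) (2 ^ n)
  have hfar : (n : ℝ) / 10 ≤ ‖exp (I * n / 2 ^ n) * ζ - 1‖ * (2 ^ n : ℕ) := by
    unfold MemArc at h
    rw [not_lt, div_le_iff₀ (by positivity)] at h
    push_cast
    linarith
  have hn' : (0 : ℝ) < n := by exact_mod_cast hn
  have hX : ((n : ℝ) / 10) ^ 2 * X ≤ 1 :=
    (mul_le_mul_of_nonneg_right (pow_le_pow_left₀ (by positivity) hfar 2) (by positivity)).trans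
      hbound
  rw [le_div_iff₀ (by positivity)]
  nlinarith

end

/-- Lemma 6.10: uniform bound for
`∑_n (2^{n+1}+1)⁻¹ |Q_{2ⁿ}(e^{in/2ⁿ} ζ)|` on the circle, where `Q_N = D_N²/(2N+1)`
and `D_N` is the Dirichlet kernel; stated via uniformly bounded partial sums. -/
theorem stmt_19 :
    ∃ C : ℝ, ∀ ζ : ℂ, ‖ζ‖ = 1 → ∀ F : Finset ℕ,
      ∑ n ∈ F, ((2 : ℝ) ^ (n + 1) + 1)⁻¹ *
        ‖(∑ k ∈ Finset.Icc (-(2 ^ n : ℤ)) (2 ^ n : ℤ),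
            (Complex.exp (Complex.I * n / 2 ^ n) * ζ) ^ k) ^ 2
          / ((2 * 2 ^ n + 1 : ℂ))‖ ≤ C := by
  refine ⟨4 + ∑' n : ℕ, 100 / (n : ℝ) ^ 2, fun ζ hζ F => ?_⟩
  simp only [inv_mul_norm_dirichletKernel_sq_div_eq]
  rw [← Finset.sum_filter_add_sum_filter_not F fun n => n ≤ 1 ∨ MemArc n ζ]
  gcongr ?_ + ?_
  · calc _ ≤ ∑ _n ∈ F.filter (fun n => n ≤ 1 ∨ MemArc n ζ), (1 : ℝ) :=
          Finset.sum_le_sum fun n _ => sq_norm_dirichletKernel_div_le_one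
            (norm_exp_I_mul_natCast_div_two_pow_mul hζ n) _
      _ = (F.filter fun n => n ≤ 1 ∨ MemArc n ζ).card := by simp
      _ ≤ 4 := by exact_mod_cast card_filter_memArc_le hζ F
  · calc _ ≤ ∑ n ∈ F.filter (fun n => ¬(n ≤ 1 ∨ MemArc n ζ)), 100 / (n : ℝ) ^ 2 := by
          refine Finset.sum_le_sum fun n hn => ?_
          rw [Finset.mem_filter, not_or, not_le] at hn
          exact sq_norm_dirichletKernel_div_le_of_not_memArc hζ (by omega) hn.2.2
      _ ≤ ∑' n : ℕ, 100 / (n : ℝ) ^ 2 :=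
          Summable.sum_le_tsum _ (fun _ _ => by positivity)
            ((Real.summable_one_div_nat_pow.mpr one_lt_two).mul_left 100 |>.congr fun n => by ring)

end
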